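/- A graph G is a line graph of some graph if and only if the edges of G can be partitioned into cliques such that every vertex of G belongs to at most two of the cliques. As a corollary, the claw K_{1,3} is not a line graph of any graph. -/

import Mathlib

attribute [local instance] Classical.propDecidable

/-- The line graph of a simple graph `G`. -/
def lineGraph {V : Type*} (G : SimpleGraph V) : SimpleGraph G.edgeSet where
  Adj a b := a ≠ b ∧ ∃ v : V, v ∈ (a : Sym2 V) ∧ v ∈ (b : Sym2 V)
  symm := by
    constructor
    rintro a b ⟨h, v, hv1, hv2⟩
    exact ⟨h.symm, v, hv2, hv1⟩
  loopless := by
    constructor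
    rintro a ⟨h, -⟩
    exact h rfl

/-- The claw `K_{1,3}`: vertex `0` joined to the three leaves `1`, `2`, `3`. -/
def claw : SimpleGraph (Fin 4) where
  Adj a b := a ≠ b ∧ (a = 0 ∨ b = 0)
  symm := by
    constructor
    rintro a b ⟨h, hab⟩
    exact ⟨h.symm, hab.symm⟩
  loopless := by
    constructor
    rintro a ⟨h, -⟩
    exact h rfl

/-!
The edges of `H` through a vertex `w` of `H` form a clique ("star") of `L(H)`; every edge of
`L(H)` lies in exactly one star, and every vertex of `L(H)` lies in the stars of its two endpoints.
Conversely, given such a clique cover of `G`, build `H` on the cliques, adding two private vertices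
for each vertex of `G`, and send every vertex of `G` to the edge joining the (at most two) cliques
through it, padded with private vertices. Two distinct vertices of `G` lie in at most one common
clique, so this assignment is injective, and it turns adjacency into sharing an endpoint.
The claw has no such cover: the three edges at its centre need three different cliques.
-/

open Finset

structure EdgeRepresentation {V : Type*} (G : SimpleGraph V) (W : Type*) where
  toFun : V → Sym2 W
  injective : Function.Injective toFun
  not_isDiag (v : V) : ¬ (toFun v).IsDiag
  adj_iff (u v : V) : G.Adj u v ↔ u ≠ v ∧ ∃ w, w ∈ toFun u ∧ w ∈ toFun v

namespace EdgeRepresentation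

variable {V W : Type*} {G : SimpleGraph V}

def ofIso {H : SimpleGraph W} (f : G ≃g lineGraph H) : EdgeRepresentation G W where
  toFun v := f v
  injective := Subtype.val_injective.comp f.injective
  not_isDiag v := H.not_isDiag_of_mem_edgeSet (f v).2
  adj_iff u v := by
    rw [← f.map_rel_iff, ← f.injective.ne_iff]
    rfl

abbrev graph (e : EdgeRepresentation G W) : SimpleGraph W :=
  SimpleGraph.fromEdgeSet (Set.range e.toFun)

lemma mem_edgeSet_graph (e : EdgeRepresentation G W) (v : V) : e.toFun v ∈ e.graph.edgeSet := by
  rw [SimpleGraph.edgeSet_fromEdgeSet]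
  exact ⟨Set.mem_range_self v, e.not_isDiag v⟩

noncomputable def iso (e : EdgeRepresentation G W) : G ≃g lineGraph e.graph where
  toEquiv := Equiv.ofBijective (fun v => ⟨e.toFun v, e.mem_edgeSet_graph v⟩) <| by
    refine ⟨fun u v h => e.injective (congrArg Subtype.val h), ?_⟩
    rintro ⟨z, hz⟩
    rw [SimpleGraph.edgeSet_fromEdgeSet] at hz
    obtain ⟨v, rfl⟩ := hz.1
    exact ⟨v, rfl⟩
  map_rel_iff' {u v} := by
    rw [e.adj_iff, ← e.injective.ne_iff]
    exact and_congr_left' (not_congr Subtype.mk_eq_mk)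

lemma eq_of_mem_of_mem (e : EdgeRepresentation G W) {u v : V} (huv : u ≠ v) {w w' : W}
    (hu : w ∈ e.toFun u) (hv : w ∈ e.toFun v) (hu' : w' ∈ e.toFun u) (hv' : w' ∈ e.toFun v) :
    w = w' := by
  by_contra hne
  exact huv <| e.injective <|
    ((Sym2.mem_and_mem_iff hne).1 ⟨hu, hu'⟩).trans ((Sym2.mem_and_mem_iff hne).1 ⟨hv, hv'⟩).symm

end EdgeRepresentation

def IsKrauszCover {V : Type*} [Fintype V] [DecidableEq V] (G : SimpleGraph V)
    (C : Finset (Finset V)) : Prop :=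
  (∀ c ∈ C, G.IsClique (c : Set V)) ∧
  (∀ e ∈ G.edgeFinset, ∃! c, c ∈ C ∧ ∀ v ∈ e, v ∈ c) ∧
  (∀ v : V, (C.filter (fun c => v ∈ c)).card ≤ 2)

namespace IsKrauszCover

variable {V : Type*} [Fintype V] [DecidableEq V] {G : SimpleGraph V} {C : Finset (Finset V)}

lemma adj_iff (hC : IsKrauszCover G C) (u v : V) :
    G.Adj u v ↔ u ≠ v ∧ ∃ c ∈ C, u ∈ c ∧ v ∈ c := by
  refine ⟨fun huv => ⟨huv.ne, ?_⟩, fun ⟨huv, c, hc, hu, hv⟩ => hC.1 c hc hu hv huv⟩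
  obtain ⟨c, ⟨hc, huvc⟩, -⟩ := hC.2.1 s(u, v) (G.mem_edgeFinset.2 huv)
  exact ⟨c, hc, huvc u (Sym2.mem_mk_left u v), huvc v (Sym2.mem_mk_right u v)⟩

lemma eq_of_mem_of_mem (hC : IsKrauszCover G C) {u v : V} (huv : u ≠ v) {c c' : Finset V}
    (hc : c ∈ C) (hu : u ∈ c) (hv : v ∈ c) (hc' : c' ∈ C) (hu' : u ∈ c') (hv' : v ∈ c') :
    c = c' := by
  have hsub {d : Finset V} (hu : u ∈ d) (hv : v ∈ d) : ∀ x ∈ s(u, v), x ∈ d := by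
    simp only [Sym2.mem_iff]
    rintro x (rfl | rfl) <;> assumption
  exact (hC.2.1 s(u, v) (G.mem_edgeFinset.2 (hC.1 c hc hu hv huv))).unique
    ⟨hc, hsub hu hv⟩ ⟨hc', hsub hu' hv'⟩

lemma card_le_two_of_isIndepSet (hC : IsKrauszCover G C) (v : V) {s : Finset V}
    (hs : s ⊆ G.neighborFinset v) (hind : G.IsIndepSet (s : Set V)) : s.card ≤ 2 := by
  have hclique (a : s) : ∃ c ∈ C, v ∈ c ∧ (a : V) ∈ c :=
    ((hC.adj_iff v a).1 ((G.mem_neighborFinset v a).1 (hs a.2))).2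
  choose c hcC hvc hac using hclique
  calc s.card = (univ.image c).card := by
        rw [card_image_of_injective _ fun a b hab => Subtype.ext ?_, card_univ, Fintype.card_coe]
        by_contra hne
        exact hind a.2 b.2 hne (hC.1 _ (hcC a) (hac a) (hab ▸ hac b) hne)
    _ ≤ (C.filter (fun c => v ∈ c)).card :=
        card_le_card fun d hd => by
          obtain ⟨a, -, rfl⟩ := mem_image.1 hd
          exact mem_filter.2 ⟨hcC a, hvc a⟩
    _ ≤ 2 := hC.2.2 v

end IsKrauszCover

namespace EdgeRepresentation

variable {V W : Type*} [Fintype V] {G : SimpleGraph V}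

noncomputable def star (e : EdgeRepresentation G W) (w : W) : Finset V :=
  univ.filter fun v => w ∈ e.toFun v

noncomputable def starCover (e : EdgeRepresentation G W) : Finset (Finset V) :=
  univ.filter (· ∈ Set.range e.star)

lemma mem_star {e : EdgeRepresentation G W} {w : W} {v : V} : v ∈ e.star w ↔ w ∈ e.toFun v := by
  simp [star]

lemma mem_starCover {e : EdgeRepresentation G W} {c : Finset V} :
    c ∈ e.starCover ↔ ∃ w, e.star w = c := by
  simp [starCover]

lemma isKrauszCover_starCover [DecidableEq V] (e : EdgeRepresentation G W) :
    IsKrauszCover G e.starCover := by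
  refine ⟨?_, ?_, fun v => ?_⟩
  · rintro _ hc u hu v hv huv
    obtain ⟨w, rfl⟩ := mem_starCover.1 hc
    exact (e.adj_iff u v).2 ⟨huv, w, mem_star.1 hu, mem_star.1 hv⟩
  · intro z hz
    induction z using Sym2.ind with | h u v => ?_
    obtain ⟨huv, w, hu, hv⟩ := (e.adj_iff u v).1 (G.mem_edgeFinset.1 hz)
    refine ⟨e.star w, ⟨mem_starCover.2 ⟨w, rfl⟩, ?_⟩, ?_⟩
    · simp only [Sym2.mem_iff]
      rintro x (rfl | rfl) <;> exact mem_star.2 ‹_›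
    · rintro _ ⟨hc, huvc⟩
      obtain ⟨w', rfl⟩ := mem_starCover.1 hc
      rw [e.eq_of_mem_of_mem huv (mem_star.1 (huvc u (Sym2.mem_mk_left u v)))
        (mem_star.1 (huvc v (Sym2.mem_mk_right u v))) hu hv]
  · calc (e.starCover.filter (fun c => v ∈ c)).card
        ≤ ((e.toFun v).toFinset.image e.star).card :=
          card_le_card fun c hc => by
            obtain ⟨hc, hvc⟩ := mem_filter.1 hc
            obtain ⟨w, rfl⟩ := mem_starCover.1 hc
            exact mem_image.2 ⟨w, Sym2.mem_toFinset.2 (mem_star.1 hvc), rfl⟩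
      _ ≤ (e.toFun v).toFinset.card := card_image_le
      _ = 2 := Sym2.card_toFinset_of_not_isDiag _ (e.not_isDiag v)

end EdgeRepresentation

lemma Sym2.exists_inl_mem_iff {α β : Type*} {s : Finset α} (hs : s.card ≤ 2) {b₁ b₂ : β}
    (hb : b₁ ≠ b₂) :
    ∃ z : Sym2 (α ⊕ β), ¬ z.IsDiag ∧ (∀ a, Sum.inl a ∈ z ↔ a ∈ s) ∧
      ∀ b, Sum.inr b ∈ z → b = b₁ ∨ b = b₂ := by
  obtain h | h | h : s.card = 0 ∨ s.card = 1 ∨ s.card = 2 := by omega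
  · obtain rfl := card_eq_zero.1 h
    exact ⟨s(.inr b₁, .inr b₂), by simp [hb]⟩
  · obtain ⟨a, rfl⟩ := card_eq_one.1 h
    exact ⟨s(.inl a, .inr b₁), by simp⟩
  · obtain ⟨a, a', ha, rfl⟩ := card_eq_two.1 h
    exact ⟨s(.inl a, .inl a'), by simp [ha]⟩

namespace IsKrauszCover

variable {V : Type*} [Fintype V] [DecidableEq V] {G : SimpleGraph V} {C : Finset (Finset V)}

lemma exists_label (hC : IsKrauszCover G C) (v : V) :
    ∃ z : Sym2 (Finset V ⊕ V × Bool), ¬ z.IsDiag ∧ (∀ c, Sum.inl c ∈ z ↔ c ∈ C ∧ v ∈ c) ∧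
      ∀ q : V × Bool, Sum.inr q ∈ z → q.1 = v := by
  obtain ⟨z, hdiag, hinl, hinr⟩ :=
    Sym2.exists_inl_mem_iff (hC.2.2 v) (b₁ := (v, false)) (b₂ := (v, true)) (by simp)
  refine ⟨z, hdiag, fun c => (hinl c).trans mem_filter, fun q hq => ?_⟩
  rcases hinr q hq with rfl | rfl <;> rfl

noncomputable def label (hC : IsKrauszCover G C) (v : V) : Sym2 (Finset V ⊕ V × Bool) :=
  (hC.exists_label v).choose

lemma not_isDiag_label (hC : IsKrauszCover G C) (v : V) : ¬ (hC.label v).IsDiag :=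
  (hC.exists_label v).choose_spec.1

lemma inl_mem_label (hC : IsKrauszCover G C) {v : V} {c : Finset V} :
    Sum.inl c ∈ hC.label v ↔ c ∈ C ∧ v ∈ c :=
  (hC.exists_label v).choose_spec.2.1 c

lemma fst_eq_of_inr_mem_label (hC : IsKrauszCover G C) {v : V} {q : V × Bool}
    (hq : Sum.inr q ∈ hC.label v) : q.1 = v :=
  (hC.exists_label v).choose_spec.2.2 q hq

lemma exists_eq_inl_of_mem_label (hC : IsKrauszCover G C) {u v : V} (huv : u ≠ v)
    {w : Finset V ⊕ V × Bool} (hu : w ∈ hC.label u) (hv : w ∈ hC.label v) :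
    ∃ c ∈ C, u ∈ c ∧ v ∈ c ∧ w = .inl c := by
  rcases w with c | q
  · obtain ⟨hc, huc⟩ := hC.inl_mem_label.1 hu
    exact ⟨c, hc, huc, (hC.inl_mem_label.1 hv).2, rfl⟩
  · exact absurd ((hC.fst_eq_of_inr_mem_label hu).symm.trans (hC.fst_eq_of_inr_mem_label hv)) huv

noncomputable def toEdgeRepresentation (hC : IsKrauszCover G C) :
    EdgeRepresentation G (Finset V ⊕ V × Bool) where
  toFun := hC.label
  injective u v h := by
    by_contra huv
    have hx := Sym2.out_fst_mem (hC.label u)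
    have hy := Sym2.other_mem hx
    obtain ⟨c, hc, huc, hvc, hxc⟩ := hC.exists_eq_inl_of_mem_label huv hx (h ▸ hx)
    obtain ⟨c', hc', huc', hvc', hyc'⟩ := hC.exists_eq_inl_of_mem_label huv hy (h ▸ hy)
    refine Sym2.other_ne (hC.not_isDiag_label u) hx (hyc'.trans ?_)
    rw [hxc, hC.eq_of_mem_of_mem huv hc' huc' hvc' hc huc hvc]
  not_isDiag := hC.not_isDiag_label
  adj_iff u v := by
    rw [hC.adj_iff]
    refine and_congr_right fun huv => ⟨fun ⟨c, hc, huc, hvc⟩ => ?_, fun ⟨w, hu, hv⟩ => ?_⟩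
    · exact ⟨.inl c, hC.inl_mem_label.2 ⟨hc, huc⟩, hC.inl_mem_label.2 ⟨hc, hvc⟩⟩
    · obtain ⟨c, hc, huc, hvc, -⟩ := hC.exists_eq_inl_of_mem_label huv hu hv
      exact ⟨c, hc, huc, hvc⟩

end IsKrauszCover

theorem isLineGraph_iff_exists_isKrauszCover {V : Type} [Fintype V] [DecidableEq V]
    (G : SimpleGraph V) :
    (∃ (W : Type) (H : SimpleGraph W), Nonempty (G ≃g lineGraph H)) ↔
      ∃ C : Finset (Finset V), IsKrauszCover G C :=
  ⟨fun ⟨_, _, ⟨f⟩⟩ => ⟨_, (EdgeRepresentation.ofIso f).isKrauszCover_starCover⟩,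
    fun ⟨_, hC⟩ => ⟨_, _, ⟨hC.toEdgeRepresentation.iso⟩⟩⟩

theorem not_isKrauszCover_claw (C : Finset (Finset (Fin 4))) : ¬ IsKrauszCover claw C := by
  intro hC
  have hs : ({1, 2, 3} : Finset (Fin 4)) ⊆ claw.neighborFinset 0 := by
    intro i hi
    simp only [SimpleGraph.mem_neighborFinset]
    fin_cases hi <;> exact ⟨by decide, Or.inl rfl⟩
  have hind : claw.IsIndepSet (({1, 2, 3} : Finset (Fin 4)) : Set (Fin 4)) := by
    intro i hi j hj hij hadj
    simp only [coe_insert, coe_singleton, Set.mem_insert_iff, Set.mem_singleton_iff] at hi hj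
    rcases hadj.2 with rfl | rfl <;> simp_all
  exact absurd (hC.card_le_two_of_isIndepSet 0 hs hind) (by decide)

/-- Krausz: A finite graph `G` is the line graph of some graph iff its
edges can be partitioned into cliques such that every vertex belongs to at most two of
the cliques.  As a corollary, the claw `K_{1,3}` is not a line graph of any graph. -/
theorem stmt19 :
    (∀ (V : Type) [Fintype V] [DecidableEq V] (G : SimpleGraph V),
      (∃ (W : Type) (H : SimpleGraph W), Nonempty (G ≃g lineGraph H)) ↔
      (∃ C : Finset (Finset V),
        (∀ c ∈ C, G.IsClique (c : Set V)) ∧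
        (∀ e ∈ G.edgeFinset, ∃! c, c ∈ C ∧ ∀ v ∈ e, v ∈ c) ∧
        (∀ v : V, (C.filter (fun c => v ∈ c)).card ≤ 2))) ∧
    ¬ ∃ (W : Type) (H : SimpleGraph W), Nonempty (claw ≃g lineGraph H) :=
  ⟨fun _ _ _ G => isLineGraph_iff_exists_isKrauszCover G,
    fun h => let ⟨C, hC⟩ := (isLineGraph_iff_exists_isKrauszCover claw).1 h
      not_isKrauszCover_claw C hC⟩
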